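/- (Representation formula for the call price.) Let (Ω, F, P) be a probability space, G ⊆ F a sub-σ-algebra, σ > 0, T > 0, ρ ∈ (−1, 1), x, κ ∈ ℝ. Let Λ and B be G-measurable real random variables with e^{−Λ} and e^{σρB} integrable, and let W be a real random variable independent of G with standard Gaussian law N(0,1). Set X = x + Λ − σ²T/2 + σρB + σ√((1−ρ²)T)·W, d₁ = (x − κ + Λ + σρB + σ²T/2 − σ²ρ²T)/(σ√((1−ρ²)T)), and d₂ = (x − κ + Λ + σρB − σ²T/2)/(σ√((1−ρ²)T)). Then E[e^{−Λ}(e^X − e^κ)^+] = e^{x − σ²ρ²T/2} · E[e^{σρB} Φ(d₁)] − e^κ · E[e^{−Λ} Φ(d₂)]. -/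

import Mathlib

/-!
Integrate out `W` first: it is independent of the `G`-measurable pair `(Λ, B)`, so it can be
integrated against `N(0,1)` with `(Λ, B)` frozen. For fixed `(Λ, B)` the payoff is a call on
`exp (y + s W)` with `y = x + Λ - σ²T/2 + σρB` and `s = σ√((1-ρ²)T)`, whose Gaussian expectation is
the Black–Scholes formula: split at the exercise boundary `W ≥ (κ - y)/s`, and use the exponential
tilt `e^{sw} N(0,1)(dw) = e^{s²/2} N(s,1)(dw)` for the first term.
-/

open MeasureTheory ProbabilityTheory Real

/-- The standard normal cumulative distribution function
`Φ(x) = ∫_{−∞}^x e^{−t²/2}/√(2π) dt`. -/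
noncomputable def stdNormalCDF (x : ℝ) : ℝ :=
  ∫ t in Set.Iic x, Real.exp (-t ^ 2 / 2) / Real.sqrt (2 * Real.pi)

open Set

lemma stdNormalCDF_eq_cdf : stdNormalCDF = cdf (gaussianReal 0 1) := by
  funext x
  rw [cdf_eq_real, measureReal_def, gaussianReal_apply_eq_integral _ one_ne_zero,
    ENNReal.toReal_ofReal (setIntegral_nonneg measurableSet_Iic
      fun t _ => gaussianPDFReal_nonneg 0 1 t)]
  refine setIntegral_congr_fun measurableSet_Iic fun t _ => ?_
  simp only [gaussianPDFReal, NNReal.coe_one, mul_one, sub_zero]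
  rw [div_eq_inv_mul]

@[fun_prop]
lemma measurable_stdNormalCDF : Measurable stdNormalCDF :=
  stdNormalCDF_eq_cdf ▸ (cdf _).mono.measurable

lemma abs_stdNormalCDF_le_one (x : ℝ) : |stdNormalCDF x| ≤ 1 := by
  rw [stdNormalCDF_eq_cdf, abs_of_nonneg (cdf_nonneg _ x)]
  exact cdf_le_one _ x

lemma MeasureTheory.Integrable.mul_stdNormalCDF {α : Type*} {mα : MeasurableSpace α} {μ : Measure α}
    {f g : α → ℝ} (hf : Integrable f μ) (hg : AEMeasurable g μ) :
    Integrable (fun a => f a * stdNormalCDF (g a)) μ :=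
  hf.mul_bdd (measurable_stdNormalCDF.comp_aemeasurable hg).aestronglyMeasurable
    (ae_of_all _ fun a => (norm_eq_abs _).trans_le (abs_stdNormalCDF_le_one (g a)))

lemma gaussianReal_real_Ici (m a : ℝ) :
    (gaussianReal m 1).real (Ici a) = stdNormalCDF (m - a) := by
  have hmap : (gaussianReal 0 1).map (m - ·) = gaussianReal m 1 := by
    rw [gaussianReal_map_const_sub, sub_zero]
  rw [← hmap, map_measureReal_apply (by fun_prop) measurableSet_Ici, stdNormalCDF_eq_cdf,
    cdf_eq_real]
  congr 1
  ext t
  simp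

lemma gaussianPDFReal_mul_exp_mul (s w : ℝ) :
    gaussianPDFReal 0 1 w * exp (s * w) = exp (s ^ 2 / 2) * gaussianPDFReal s 1 w := by
  simp only [gaussianPDFReal, NNReal.coe_one, mul_one, sub_zero]
  rw [mul_left_comm, mul_assoc, ← exp_add, ← exp_add]
  ring_nf

lemma setIntegral_exp_mul_gaussianReal (s : ℝ) {A : Set ℝ} (hA : MeasurableSet A) :
    ∫ w in A, exp (s * w) ∂gaussianReal 0 1 = exp (s ^ 2 / 2) * (gaussianReal s 1).real A := by
  rw [measureReal_def, gaussianReal_apply_eq_integral _ one_ne_zero,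
    ENNReal.toReal_ofReal (setIntegral_nonneg hA fun t _ => gaussianPDFReal_nonneg s 1 t),
    ← integral_const_mul, ← integral_indicator hA, ← integral_indicator hA,
    integral_gaussianReal_eq_integral_smul one_ne_zero]
  congr 1
  funext w
  by_cases hw : w ∈ A
  · simp [indicator_of_mem hw, gaussianPDFReal_mul_exp_mul]
  · simp [indicator_of_notMem hw]

theorem integral_max_exp_sub_gaussianReal {s : ℝ} (hs : 0 < s) (y κ : ℝ) :
    ∫ w, max (exp (y + s * w) - exp κ) 0 ∂gaussianReal 0 1 =
      exp (y + s ^ 2 / 2) * stdNormalCDF ((y - κ) / s + s) - exp κ * stdNormalCDF ((y - κ) / s) := by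
  set c := (κ - y) / s
  have hpayoff : (fun w => max (exp (y + s * w) - exp κ) 0) =
      (Ici c).indicator fun w => exp y * exp (s * w) - exp κ := by
    funext w
    by_cases hw : c ≤ w
    · rw [indicator_of_mem (mem_Ici.2 hw), max_eq_left, exp_add]
      rw [sub_nonneg, exp_le_exp]
      have := (div_le_iff₀ hs).1 hw
      linarith
    · rw [indicator_of_notMem (fun h => hw (mem_Ici.1 h)), max_eq_right]
      rw [sub_nonpos, exp_le_exp]
      have := (lt_div_iff₀ hs).1 (not_le.1 hw)
      linarith
  have hint : Integrable (fun w => exp y * exp (s * w)) (gaussianReal 0 1) :=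
    (integrable_exp_mul_gaussianReal s).const_mul _
  rw [hpayoff, integral_indicator measurableSet_Ici,
    integral_sub hint.integrableOn (integrable_const _).integrableOn, integral_const_mul,
    setIntegral_exp_mul_gaussianReal s measurableSet_Ici, setIntegral_const,
    gaussianReal_real_Ici, gaussianReal_real_Ici, exp_add, smul_eq_mul]
  have h1 : s - c = (y - κ) / s + s := by simp only [c]; field_simp; ring
  have h2 : 0 - c = (y - κ) / s := by simp only [c]; field_simp; ring
  rw [h1, h2]
  ring

theorem ProbabilityTheory.IndepFun.integral_comp_eq_integral_integral_map {Ω E E' V : Type*}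
    {mΩ : MeasurableSpace Ω} [MeasurableSpace E] [MeasurableSpace E'] [NormedAddCommGroup V]
    [NormedSpace ℝ V] {P : Measure Ω} [IsFiniteMeasure P] {Z : Ω → E} {W : Ω → E'}
    (hZ : AEMeasurable Z P) (hW : AEMeasurable W P) (hZW : IndepFun Z W P)
    {f : E × E' → V} (hf : Integrable f ((P.map Z).prod (P.map W))) :
    ∫ ω, f (Z ω, W ω) ∂P = ∫ ω, ∫ w, f (Z ω, w) ∂(P.map W) ∂P := by
  have hmap := (indepFun_iff_map_prod_eq_prod_map_map hZ hW).1 hZW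
  rw [← integral_map (hZ.prodMk hW) (hmap ▸ hf.aestronglyMeasurable), hmap, integral_prod f hf,
    integral_map hZ hf.integral_prod_left.aestronglyMeasurable]

lemma integrable_exp_neg_mul_max_exp_sub {ν : Measure (ℝ × ℝ)} [SFinite ν] (x a c s κ : ℝ)
    (hν : Integrable (fun p : ℝ × ℝ => exp (c * p.2)) ν) :
    Integrable (fun q : (ℝ × ℝ) × ℝ => exp (-q.1.1) *
      max (exp (x + q.1.1 - a + c * q.1.2 + s * q.2) - exp κ) 0) (ν.prod (gaussianReal 0 1)) := by
  refine ((hν.const_mul (exp (x - a))).mul_prod (integrable_exp_mul_gaussianReal s)).mono'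
    (by fun_prop) (ae_of_all _ fun q => ?_)
  rw [norm_of_nonneg (by positivity), mul_assoc, ← exp_add, ← exp_add]
  calc exp (-q.1.1) * max (exp (x + q.1.1 - a + c * q.1.2 + s * q.2) - exp κ) 0
      ≤ exp (-q.1.1) * exp (x + q.1.1 - a + c * q.1.2 + s * q.2) := by
        gcongr
        exact max_le (sub_le_self _ (exp_pos κ).le) (exp_pos _).le
    _ = exp (x - a + (c * q.1.2 + s * q.2)) := by rw [← exp_add]; ring_nf

lemma integral_exp_neg_mul_max_exp_sub_gaussianReal {σ T ρ s : ℝ} (hs : 0 < s)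
    (hs2 : s ^ 2 = σ ^ 2 * ((1 - ρ ^ 2) * T)) (x κ l b : ℝ) :
    ∫ w, exp (-l) * max (exp (x + l - σ ^ 2 * T / 2 + σ * ρ * b + s * w) - exp κ) 0
        ∂gaussianReal 0 1 =
      exp (x - σ ^ 2 * ρ ^ 2 * T / 2) * (exp (σ * ρ * b) *
          stdNormalCDF ((x - κ + l + σ * ρ * b + σ ^ 2 * T / 2 - σ ^ 2 * ρ ^ 2 * T) / s)) -
        exp κ * (exp (-l) * stdNormalCDF ((x - κ + l + σ * ρ * b - σ ^ 2 * T / 2) / s)) := by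
  set d₁ := (x - κ + l + σ * ρ * b + σ ^ 2 * T / 2 - σ ^ 2 * ρ ^ 2 * T) / s
  have hd₁ : (x + l - σ ^ 2 * T / 2 + σ * ρ * b - κ) / s + s = d₁ := by
    rw [div_add' _ _ _ hs.ne']
    congr 1
    linear_combination hs2
  have hd₂ : (x + l - σ ^ 2 * T / 2 + σ * ρ * b - κ) / s =
      (x - κ + l + σ * ρ * b - σ ^ 2 * T / 2) / s := by ring
  have hexp : exp (-l) * exp (x + l - σ ^ 2 * T / 2 + σ * ρ * b + s ^ 2 / 2) =
      exp (x - σ ^ 2 * ρ ^ 2 * T / 2) * exp (σ * ρ * b) := by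
    rw [← exp_add, ← exp_add]
    congr 1
    linear_combination hs2 / 2
  rw [integral_const_mul, integral_max_exp_sub_gaussianReal hs, hd₁, hd₂]
  linear_combination stdNormalCDF d₁ * hexp

/-- **Representation formula for the call price.** With `Λ, B` `G`-measurable such that
`e^{−Λ}` and `e^{σρB}` are integrable, `W` independent of `G` and standard Gaussian,
`X = x + Λ − σ²T/2 + σρB + σ√((1−ρ²)T)·W`,
`d₁ = (x − κ + Λ + σρB + σ²T/2 − σ²ρ²T)/(σ√((1−ρ²)T))` and
`d₂ = (x − κ + Λ + σρB − σ²T/2)/(σ√((1−ρ²)T))`, one has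
`E[e^{−Λ}(e^X − e^κ)^+] = e^{x − σ²ρ²T/2} E[e^{σρB} Φ(d₁)] − e^κ E[e^{−Λ} Φ(d₂)]`. -/
theorem stmt_6 {Ω : Type*} {F : MeasurableSpace Ω} (P : Measure Ω) [IsProbabilityMeasure P]
    (G : MeasurableSpace Ω) (hG : G ≤ F)
    (σ T ρ x κ : ℝ) (hσ : 0 < σ) (hT : 0 < T) (hρ : ρ ∈ Set.Ioo (-1 : ℝ) 1)
    (Λ B : Ω → ℝ) (hΛ : Measurable[G] Λ) (hB : Measurable[G] B)
    (hΛint : Integrable (fun ω => Real.exp (-Λ ω)) P)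
    (hBint : Integrable (fun ω => Real.exp (σ * ρ * B ω)) P)
    (W : Ω → ℝ) (hW : Measurable[F] W)
    (hindep : Indep (MeasurableSpace.comap W inferInstance) G P)
    (hlaw : @Measure.map Ω ℝ F _ W P = gaussianReal 0 1)
    (X d₁ d₂ : Ω → ℝ)
    (hX : X = fun ω => x + Λ ω - σ ^ 2 * T / 2 + σ * ρ * B ω +
      σ * Real.sqrt ((1 - ρ ^ 2) * T) * W ω)
    (hd₁ : d₁ = fun ω => (x - κ + Λ ω + σ * ρ * B ω + σ ^ 2 * T / 2 - σ ^ 2 * ρ ^ 2 * T) /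
      (σ * Real.sqrt ((1 - ρ ^ 2) * T)))
    (hd₂ : d₂ = fun ω => (x - κ + Λ ω + σ * ρ * B ω - σ ^ 2 * T / 2) /
      (σ * Real.sqrt ((1 - ρ ^ 2) * T))) :
    ∫ ω, Real.exp (-Λ ω) * max (Real.exp (X ω) - Real.exp κ) 0 ∂P =
      Real.exp (x - σ ^ 2 * ρ ^ 2 * T / 2) *
          ∫ ω, Real.exp (σ * ρ * B ω) * stdNormalCDF (d₁ ω) ∂P -
        Real.exp κ * ∫ ω, Real.exp (-Λ ω) * stdNormalCDF (d₂ ω) ∂P := by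
  subst hX hd₁ hd₂
  set s := σ * √((1 - ρ ^ 2) * T)
  have hvar : 0 < (1 - ρ ^ 2) * T := mul_pos (by nlinarith [hρ.1, hρ.2]) hT
  have hs : 0 < s := mul_pos hσ (sqrt_pos.2 hvar)
  have hs2 : s ^ 2 = σ ^ 2 * ((1 - ρ ^ 2) * T) := by rw [mul_pow, sq_sqrt hvar.le]
  have hΛF : Measurable[F] Λ := hΛ.mono hG le_rfl
  have hBF : Measurable[F] B := hB.mono hG le_rfl
  have hZ : Measurable[F] fun ω => (Λ ω, B ω) := hΛF.prodMk hBF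
  have hind : IndepFun (fun ω => (Λ ω, B ω)) W P :=
    (indep_of_indep_of_le_right hindep (hΛ.prodMk hB).comap_le).symm
  -- Leaves `F` as the only σ-algebra on `Ω` for instance search.
  clear hindep hΛ hB hG G
  have hB' : Integrable (fun p : ℝ × ℝ => exp (σ * ρ * p.2)) (P.map fun ω => (Λ ω, B ω)) :=
    (integrable_map_measure (by fun_prop) hZ.aemeasurable).2 hBint
  have hfreeze := hind.integral_comp_eq_integral_integral_map hZ.aemeasurable hW.aemeasurable
    (hlaw ▸ integrable_exp_neg_mul_max_exp_sub x (σ ^ 2 * T / 2) (σ * ρ) s κ hB')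
  simp only [hlaw, integral_exp_neg_mul_max_exp_sub_gaussianReal hs hs2] at hfreeze
  rw [hfreeze, integral_sub, integral_const_mul, integral_const_mul]
  · exact (hBint.mul_stdNormalCDF (by fun_prop)).const_mul _
  · exact (hΛint.mul_stdNormalCDF (by fun_prop)).const_mul _
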